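/- arXiv:2407.21294 — 2 statements merged into one kernel-verified Lean document; each statement's English description precedes it below -/
import Mathlib

section
/- The stable matching game is weakly acyclic: from every pure strategy profile x^0 there exists a finite better-response path ending at a pure Nash equilibrium; moreover, such a path of length at most |M|·|W| + |M|² always exists. -/
/-!
A man's payoff is `μ m w` if the woman `w` he proposes to holds no proposal she prefers, and `0`
otherwise. First let matched men who are not best-responding switch to a best response: each
such move takes a man to a woman he strictly prefers, so the number of pairs `(m, w)` with
`μ m w ≤ μ m (a m)` grows and at most `n²` moves occur. In the resulting good state every
matched man is best-responding. Now let unmatched men best-respond: an unmatched man leaving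
his woman frees nobody, so the state stays good, and the woman he moves to now holds a better
suitor, so the number of pairs `(w, k)` with `k` ranked by `w` at most as high as one of her
suitors grows; again at most `n²` moves occur, and the process can only stop at a pure Nash
equilibrium.
-/

open Finset Real MeasureTheory

namespace SM

variable {n : ℕ}

/-- The set of men that woman `w` strictly prefers to man `m`
(`rankW w k` is woman `w`'s cardinal ranking score of man `k`;
`k >_w m` iff `rankW w m < rankW w k`). -/
noncomputable def better (rankW : Fin n → Fin n → ℝ) (w m : Fin n) : Finset (Fin n) :=
  Finset.univ.filter fun k => rankW w m < rankW w k

/-- Market assumptions: men's cardinal preferences lie in `(0,1]` with no ties, and each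
woman's ranking of the men is strict (injective scores). -/
def MarketHyp (μp rankW : Fin n → Fin n → ℝ) : Prop :=
  (∀ m w, μp m w ∈ Set.Ioc (0:ℝ) 1) ∧
  (∀ m w w', w ≠ w' → μp m w ≠ μp m w') ∧
  (∀ w, Function.Injective (rankW w))

/-- `v_{mw}(x) = μ_{mw} ∏_{k >_w m} (1 - x_{kw})`. -/
noncomputable def vv (μp rankW : Fin n → Fin n → ℝ) (x : Fin n → Fin n → ℝ) (m w : Fin n) : ℝ :=
  μp m w * ∏ k ∈ better rankW w m, (1 - x k w)

/-- Payoff `u_m(x) = ∑_w v_{mw}(x) x_{mw}` of man `m` in the stable matching game. -/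
noncomputable def uu (μp rankW : Fin n → Fin n → ℝ) (x : Fin n → Fin n → ℝ) (m : Fin n) : ℝ :=
  ∑ w, vv μp rankW x m w * x m w

/-- Mixed strategy: a probability vector over the women. -/
def IsStrategy (y : Fin n → ℝ) : Prop := (∀ w, 0 ≤ y w) ∧ ∑ w, y w = 1

/-- Pure strategy: the indicator vector of a single woman. -/
def IsPure (y : Fin n → ℝ) : Prop := ∃ w₀, y = fun w => if w = w₀ then (1:ℝ) else 0

/-- (Mixed) Nash equilibrium of the stable matching game. -/
def IsNE (μp rankW : Fin n → Fin n → ℝ) (x : Fin n → Fin n → ℝ) : Prop :=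
  (∀ m, IsStrategy (x m)) ∧
  ∀ m y, IsStrategy y → uu μp rankW (Function.update x m y) m ≤ uu μp rankW x m

/-- Pure Nash equilibrium of the stable matching game. -/
def IsPureNE (μp rankW : Fin n → Fin n → ℝ) (x : Fin n → Fin n → ℝ) : Prop :=
  (∀ m, IsPure (x m)) ∧
  ∀ m y, IsPure y → uu μp rankW (Function.update x m y) m ≤ uu μp rankW x m

/-- Characteristic vector of the perfect matching `σ`. -/
def charVec (σ : Equiv.Perm (Fin n)) : Fin n → Fin n → ℝ :=
  fun m w => if w = σ m then 1 else 0

/-- A perfect matching `σ` is stable iff it admits no blocking pair `(m, σ m')`. -/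
def IsStableMatching (μp rankW : Fin n → Fin n → ℝ) (σ : Equiv.Perm (Fin n)) : Prop :=
  ¬ ∃ m m' : Fin n, m ≠ m' ∧ μp m (σ m) < μp m (σ m') ∧ rankW (σ m') m' < rankW (σ m') m

/-- `Δ = min_{m, w ≠ w'} |μ_{mw} - μ_{mw'}|`. -/
noncomputable def gapDelta (μp : Fin n → Fin n → ℝ) : ℝ :=
  sInf {d : ℝ | ∃ m w w' : Fin n, w ≠ w' ∧ d = |μp m w - μp m w'|}

/-- `μ_min = min_{m,w} μ_{mw}`. -/
noncomputable def muMin (μp : Fin n → Fin n → ℝ) : ℝ :=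
  sInf {a : ℝ | ∃ m w : Fin n, a = μp m w}

/-- `μ_max = max_{m,w} μ_{mw}`. -/
noncomputable def muMax (μp : Fin n → Fin n → ℝ) : ℝ :=
  sSup {a : ℝ | ∃ m w : Fin n, a = μp m w}

/-- Entrywise ℓ¹ distance on strategy profiles. -/
noncomputable def l1dist (x y : Fin n → Fin n → ℝ) : ℝ :=
  ∑ m, ∑ w, |x m w - y m w|

/-- The logit (exponential-weights) map. -/
noncomputable def logit (η : ℝ) (L : Fin n → ℝ) (w : Fin n) : ℝ :=
  Real.exp (η * L w) / ∑ w', Real.exp (η * L w')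

/-- The strategy profile of indicator vectors associated with the action profile `a`
(man `m` proposes to woman `a m`). -/
def pureProfile (a : Fin n → Fin n) : Fin n → Fin n → ℝ := fun m w => if w = a m then 1 else 0

/-- Payoff of man `m` at the pure action profile `a`. -/
noncomputable def uP (μp rankW : Fin n → Fin n → ℝ) (a : Fin n → Fin n) (m : Fin n) : ℝ :=
  uu μp rankW (pureProfile a) m

/-- Man `m` is playing a (pure) best response at the action profile `a`. -/
def IsBR (μp rankW : Fin n → Fin n → ℝ) (a : Fin n → Fin n) (m : Fin n) : Prop :=
  ∀ w : Fin n, uP μp rankW (Function.update a m w) m ≤ uP μp rankW a m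

/-- Pure Nash equilibrium of the pure-action stable matching game. -/
def IsPureNEAction (μp rankW : Fin n → Fin n → ℝ) (a : Fin n → Fin n) : Prop :=
  ∀ m, IsBR μp rankW a m

/-- Man `m` is matched at `a`: no man more preferred by woman `a m` also proposes to her. -/
def MatchedIn (rankW : Fin n → Fin n → ℝ) (a : Fin n → Fin n) (m : Fin n) : Prop :=
  ∀ k ∈ better rankW (a m) m, a k ≠ a m

/-- Good state: every matched man is at his best response. -/
def GoodState (μp rankW : Fin n → Fin n → ℝ) (a : Fin n → Fin n) : Prop :=
  ∀ m, MatchedIn rankW a m → IsBR μp rankW a m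

section RelPath

variable {α : Type*} (r : α → α → Prop)

inductive RelPath : ℕ → α → α → Prop
  | refl (a : α) : RelPath 0 a a
  | cons {a b c : α} {L : ℕ} : r a b → RelPath L b c → RelPath (L + 1) a c

variable {r}

theorem RelPath.append {L₁ L₂ : ℕ} {a b c : α} (h₁ : RelPath r L₁ a b) (h₂ : RelPath r L₂ b c) :
    RelPath r (L₁ + L₂) a c := by
  induction h₁ with
  | refl => simpa using h₂
  | cons hab _ ih => rw [Nat.add_right_comm]; exact .cons hab (ih h₂)

theorem RelPath.exists_seq {L : ℕ} {a b : α} (h : RelPath r L a b) :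
    ∃ p : ℕ → α, p 0 = a ∧ p L = b ∧ ∀ ℓ < L, r (p ℓ) (p (ℓ + 1)) := by
  induction h with
  | refl a => exact ⟨fun _ => a, rfl, rfl, fun _ h => absurd h (Nat.not_lt_zero _)⟩
  | @cons a b c L hab _ ih =>
    obtain ⟨p, hp0, hpL, hp⟩ := ih
    refine ⟨fun | 0 => a | ℓ + 1 => p ℓ, rfl, hpL, ?_⟩
    rintro (_ | ℓ) hℓ
    · simpa [hp0] using hab
    · exact hp ℓ (by omega)

theorem RelPath.exists_of_potential (I P : α → Prop) (Φ : α → ℕ) (B : ℕ) (hΦ : ∀ a, Φ a ≤ B)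
    (hstep : ∀ a, I a → ¬ P a → ∃ b, r a b ∧ I b ∧ Φ a < Φ b) (a : α) (ha : I a) :
    ∃ L b, L ≤ B - Φ a ∧ RelPath r L a b ∧ I b ∧ P b := by
  induction hk : B - Φ a using Nat.strong_induction_on generalizing a with
  | _ k ih =>
    by_cases hP : P a
    · exact ⟨0, a, Nat.zero_le _, .refl a, ha, hP⟩
    obtain ⟨b, hab, hb, hΦab⟩ := hstep a ha hP
    have := hΦ b
    obtain ⟨L, c, hL, hbc, hc, hPc⟩ := ih (B - Φ b) (by omega) b hb rfl
    exact ⟨L + 1, c, by omega, .cons hab hbc, hc, hPc⟩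

end RelPath

theorem sum_card_le_mul_self (s : Fin n → Finset (Fin n)) : ∑ i, (s i).card ≤ n * n := by
  simpa using Finset.sum_le_card_nsmul univ (fun i => (s i).card) n
    fun i _ => (card_le_univ (s i)).trans_eq (Fintype.card_fin n)

section Game

variable (μp rankW : Fin n → Fin n → ℝ)

/-- `MatchedIn rankW a m` is definitionally `Accepts rankW a (a m) m`. -/
def Accepts (a : Fin n → Fin n) (w m : Fin n) : Prop :=
  ∀ k ∈ better rankW w m, a k ≠ w

variable {μp rankW}

lemma mem_better_iff {w m k : Fin n} : k ∈ better rankW w m ↔ rankW w m < rankW w k := by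
  simp [better]

lemma ne_of_mem_better {w m k : Fin n} (hk : k ∈ better rankW w m) : k ≠ m := by
  rintro rfl
  exact lt_irrefl _ (mem_better_iff.mp hk)

lemma matchedIn_update_self_iff {a : Fin n → Fin n} {m w : Fin n} :
    MatchedIn rankW (Function.update a m w) m ↔ Accepts rankW a w m := by
  simp only [MatchedIn, Accepts, Function.update_self]
  refine forall₂_congr fun k hk => ?_
  rw [Function.update_of_ne (ne_of_mem_better hk)]

lemma uP_of_matchedIn {a : Fin n → Fin n} {m : Fin n} (h : MatchedIn rankW a m) :
    uP μp rankW a m = μp m (a m) := by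
  rw [uP, uu, Finset.sum_eq_single (a m) (fun w _ hw => by simp [pureProfile, hw]) (by simp)]
  simp only [vv, pureProfile, if_true, mul_one]
  rw [Finset.prod_eq_one fun k hk => by simp [(h k hk).symm], mul_one]

lemma uP_of_not_matchedIn {a : Fin n → Fin n} {m : Fin n} (h : ¬ MatchedIn rankW a m) :
    uP μp rankW a m = 0 := by
  obtain ⟨k, hk, hka⟩ : ∃ k ∈ better rankW (a m) m, a k = a m := by
    simpa [MatchedIn] using h
  rw [uP, uu, Finset.sum_eq_single (a m) (fun w _ hw => by simp [pureProfile, hw]) (by simp)]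
  simp only [vv, pureProfile, if_true, mul_one]
  rw [Finset.prod_eq_zero hk (by simp [hka]), mul_zero]

lemma uP_update_self_of_accepts {a : Fin n → Fin n} {m w : Fin n} (h : Accepts rankW a w m) :
    uP μp rankW (Function.update a m w) m = μp m w := by
  rw [uP_of_matchedIn (matchedIn_update_self_iff.mpr h), Function.update_self]

lemma uP_update_self_of_not_accepts {a : Fin n → Fin n} {m w : Fin n}
    (h : ¬ Accepts rankW a w m) : uP μp rankW (Function.update a m w) m = 0 :=
  uP_of_not_matchedIn (mt matchedIn_update_self_iff.mp h)

lemma uP_nonneg (hμ : ∀ m w, 0 ≤ μp m w) (a : Fin n → Fin n) (m : Fin n) :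
    0 ≤ uP μp rankW a m := by
  by_cases h : MatchedIn rankW a m
  · rw [uP_of_matchedIn h]; exact hμ _ _
  · rw [uP_of_not_matchedIn h]

lemma isBR_iff (hμ : ∀ m w, 0 ≤ μp m w) {a : Fin n → Fin n} {m : Fin n} :
    IsBR μp rankW a m ↔ ∀ w, Accepts rankW a w m → μp m w ≤ uP μp rankW a m := by
  refine ⟨fun h w hw => (uP_update_self_of_accepts hw).symm.trans_le (h w), fun h w => ?_⟩
  by_cases hw : Accepts rankW a w m
  · rw [uP_update_self_of_accepts hw]; exact h w hw
  · rw [uP_update_self_of_not_accepts hw]; exact uP_nonneg hμ a m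

/-- A gain over a nonnegative payoff is only possible at a woman who accepts him. -/
lemma exists_accepts_improving_isBR (hμ : ∀ m w, 0 ≤ μp m w) {a : Fin n → Fin n} {m : Fin n}
    (h : ¬ IsBR μp rankW a m) :
    ∃ w, Accepts rankW a w m ∧ uP μp rankW a m < μp m w ∧
      IsBR μp rankW (Function.update a m w) m := by
  obtain ⟨w, -, hmax⟩ := Finset.exists_max_image univ
    (fun w => uP μp rankW (Function.update a m w) m) ⟨m, mem_univ m⟩
  obtain ⟨v, hv⟩ : ∃ v, uP μp rankW a m < uP μp rankW (Function.update a m v) m := by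
    simpa [IsBR] using h
  have hlt := hv.trans_le (hmax v (mem_univ v))
  have hw : Accepts rankW a w m := by
    by_contra hw
    rw [uP_update_self_of_not_accepts hw] at hlt
    exact hlt.not_ge (uP_nonneg hμ a m)
  refine ⟨w, hw, hlt.trans_eq (uP_update_self_of_accepts hw), fun v => ?_⟩
  rw [Function.update_idem]
  exact hmax v (mem_univ v)

/-- A man leaving a woman who rejects him frees nobody: any better man he could block
there is blocked by his own rival already. -/
lemma accepts_of_accepts_update {a : Fin n → Fin n} {m p v w : Fin n}
    (hm : ¬ MatchedIn rankW a m) (hp : p ≠ m)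
    (h : Accepts rankW (Function.update a m v) w p) : Accepts rankW a w p := by
  obtain ⟨q, hq, hqa⟩ : ∃ q ∈ better rankW (a m) m, a q = a m := by
    simpa [MatchedIn] using hm
  intro k hk
  rcases eq_or_ne k m with rfl | hkm
  · rintro rfl
    have hqp : q ∈ better rankW (a k) p :=
      mem_better_iff.mpr ((mem_better_iff.mp hk).trans (mem_better_iff.mp hq))
    have := h q hqp
    rw [Function.update_of_ne (ne_of_mem_better hq)] at this
    exact this hqa
  · simpa [Function.update_of_ne hkm] using h k hk

lemma matchedIn_of_matchedIn_update {a : Fin n → Fin n} {m p v : Fin n}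
    (hm : ¬ MatchedIn rankW a m) (hp : p ≠ m)
    (h : MatchedIn rankW (Function.update a m v) p) : MatchedIn rankW a p := by
  unfold MatchedIn at h
  rw [Function.update_of_ne hp] at h
  exact accepts_of_accepts_update hm hp h

lemma goodState_update (hμ : ∀ m w, 0 ≤ μp m w) {a : Fin n → Fin n} {m v : Fin n}
    (hgood : GoodState μp rankW a) (hm : ¬ MatchedIn rankW a m)
    (hbr : IsBR μp rankW (Function.update a m v) m) :
    GoodState μp rankW (Function.update a m v) := by
  intro p hp
  rcases eq_or_ne p m with rfl | hpm
  · exact hbr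
  have hpa := matchedIn_of_matchedIn_update hm hpm hp
  have hu : uP μp rankW (Function.update a m v) p = uP μp rankW a p := by
    rw [uP_of_matchedIn hp, uP_of_matchedIn hpa, Function.update_of_ne hpm]
  rw [isBR_iff hμ, hu]
  exact fun w hw => (isBR_iff hμ).mp (hgood p hpa) w (accepts_of_accepts_update hm hpm hw)

end Game

section Potentials

variable (μp rankW : Fin n → Fin n → ℝ)

noncomputable def menPotential (a : Fin n → Fin n) : ℕ :=
  ∑ p, (univ.filter fun w => μp p w ≤ μp p (a p)).card

noncomputable def suitorLowerSet (a : Fin n → Fin n) (w : Fin n) : Finset (Fin n) :=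
  univ.filter fun k => ∃ p, a p = w ∧ rankW w k ≤ rankW w p

noncomputable def womenPotential (a : Fin n → Fin n) : ℕ :=
  ∑ w, (suitorLowerSet rankW a w).card

variable {μp rankW}

lemma menPotential_lt_update {a : Fin n → Fin n} {m w : Fin n} (h : μp m (a m) < μp m w) :
    menPotential μp a < menPotential μp (Function.update a m w) := by
  have hm : (univ.filter fun v => μp m v ≤ μp m (a m)).card
      < (univ.filter fun v => μp m v ≤ μp m w).card := by
    refine card_lt_card ⟨fun v hv => ?_, fun hsub => ?_⟩
    · simp only [mem_filter, mem_univ, true_and] at hv ⊢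
      exact hv.trans h.le
    · exact h.not_ge (by simpa using hsub (by simp : w ∈ univ.filter fun v => μp m v ≤ μp m w))
  refine Finset.sum_lt_sum (fun p _ => ?_) ⟨m, mem_univ m, by simpa using hm⟩
  rcases eq_or_ne p m with rfl | hpm
  · simpa using hm.le
  · rw [Function.update_of_ne hpm]

lemma suitorLowerSet_subset_update {a : Fin n → Fin n} {m v : Fin n}
    (hm : ¬ MatchedIn rankW a m) (w : Fin n) :
    suitorLowerSet rankW a w ⊆ suitorLowerSet rankW (Function.update a m v) w := by
  obtain ⟨q, hq, hqa⟩ : ∃ q ∈ better rankW (a m) m, a q = a m := by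
    simpa [MatchedIn] using hm
  simp only [suitorLowerSet, subset_iff, mem_filter, mem_univ, true_and]
  rintro k ⟨p, rfl, hkp⟩
  rcases eq_or_ne p m with rfl | hpm
  · exact ⟨q, by rw [Function.update_of_ne (ne_of_mem_better hq), hqa],
      hkp.trans (mem_better_iff.mp hq).le⟩
  · exact ⟨p, Function.update_of_ne hpm .., hkp⟩

/-- She accepts `m`, so he outranks all her previous suitors and is new to her lower set. -/
lemma suitorLowerSet_ssubset_update (hinj : ∀ w, Function.Injective (rankW w))
    {a : Fin n → Fin n} {m w : Fin n} (hm : ¬ MatchedIn rankW a m) (hw : Accepts rankW a w m) :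
    suitorLowerSet rankW a w ⊂ suitorLowerSet rankW (Function.update a m w) w := by
  have hne : a m ≠ w := by
    rintro rfl
    exact hm hw
  refine Finset.ssubset_iff_subset_ne.mpr ⟨suitorLowerSet_subset_update hm w, fun heq => ?_⟩
  have hmem : m ∈ suitorLowerSet rankW (Function.update a m w) w := by
    simp only [suitorLowerSet, mem_filter, mem_univ, true_and]
    exact ⟨m, Function.update_self .., le_rfl⟩
  rw [← heq] at hmem
  obtain ⟨p, hpa, hmp⟩ : ∃ p, a p = w ∧ rankW w m ≤ rankW w p := by
    simpa [suitorLowerSet] using hmem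
  have hpm : p ≠ m := by
    rintro rfl
    exact hne hpa
  exact hw p (mem_better_iff.mpr (hmp.lt_of_ne fun h => hpm (hinj w h).symm)) hpa

lemma womenPotential_lt_update (hinj : ∀ w, Function.Injective (rankW w))
    {a : Fin n → Fin n} {m w : Fin n} (hm : ¬ MatchedIn rankW a m) (hw : Accepts rankW a w m) :
    womenPotential rankW a < womenPotential rankW (Function.update a m w) :=
  Finset.sum_lt_sum (fun v _ => card_le_card (suitorLowerSet_subset_update hm v))
    ⟨w, mem_univ w, card_lt_card (suitorLowerSet_ssubset_update hinj hm hw)⟩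

end Potentials

section Dynamics

variable (μp rankW : Fin n → Fin n → ℝ)

def BetterResponseStep (a b : Fin n → Fin n) : Prop :=
  ∃ i : Fin n, (∀ j : Fin n, j ≠ i → b j = a j) ∧ uP μp rankW a i < uP μp rankW b i

variable {μp rankW}

lemma betterResponseStep_update {a : Fin n → Fin n} {m w : Fin n}
    (h : uP μp rankW a m < uP μp rankW (Function.update a m w) m) :
    BetterResponseStep μp rankW a (Function.update a m w) :=
  ⟨m, fun _ hj => Function.update_of_ne hj .., h⟩

lemma exists_step_of_not_goodState (hμ : ∀ m w, 0 ≤ μp m w) {a : Fin n → Fin n}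
    (h : ¬ GoodState μp rankW a) :
    ∃ b, BetterResponseStep μp rankW a b ∧ menPotential μp a < menPotential μp b := by
  obtain ⟨m, hm, hbr⟩ : ∃ m, MatchedIn rankW a m ∧ ¬ IsBR μp rankW a m := by
    simpa [GoodState] using h
  obtain ⟨w, hw, hlt, -⟩ := exists_accepts_improving_isBR hμ hbr
  refine ⟨_, betterResponseStep_update (hlt.trans_eq (uP_update_self_of_accepts hw).symm),
    menPotential_lt_update ?_⟩
  rwa [uP_of_matchedIn hm] at hlt

lemma exists_step_of_not_isPureNEAction (hμ : ∀ m w, 0 ≤ μp m w)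
    (hinj : ∀ w, Function.Injective (rankW w)) {a : Fin n → Fin n}
    (hgood : GoodState μp rankW a) (h : ¬ IsPureNEAction μp rankW a) :
    ∃ b, BetterResponseStep μp rankW a b ∧ GoodState μp rankW b ∧
      womenPotential rankW a < womenPotential rankW b := by
  obtain ⟨m, hbr⟩ : ∃ m, ¬ IsBR μp rankW a m := by
    simpa [IsPureNEAction] using h
  have hm : ¬ MatchedIn rankW a m := fun hm => hbr (hgood m hm)
  obtain ⟨w, hw, hlt, hbr'⟩ := exists_accepts_improving_isBR hμ hbr
  exact ⟨_, betterResponseStep_update (hlt.trans_eq (uP_update_self_of_accepts hw).symm),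
    goodState_update hμ hgood hm hbr', womenPotential_lt_update hinj hm hw⟩

end Dynamics

/-- the stable matching game is weakly acyclic: from every pure strategy
profile there is a better-response path of length at most `|M||W| + |M|²` ending at a
pure Nash equilibrium. -/
theorem weakly_acyclic {n : ℕ} (μp rankW : Fin n → Fin n → ℝ)
    (hM : MarketHyp μp rankW) (a0 : Fin n → Fin n) :
    ∃ (L : ℕ) (path : ℕ → Fin n → Fin n),
      L ≤ n * n + n * n ∧ path 0 = a0 ∧
      (∀ ℓ < L, ∃ i : Fin n,
        (∀ j : Fin n, j ≠ i → path (ℓ+1) j = path ℓ j) ∧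
        uP μp rankW (path ℓ) i < uP μp rankW (path (ℓ+1)) i) ∧
      IsPureNEAction μp rankW (path L) := by
  have hμ : ∀ m w, 0 ≤ μp m w := fun m w => (hM.1 m w).1.le
  obtain ⟨L₁, a₁, hL₁, path₁, -, hgood⟩ :=
    RelPath.exists_of_potential (fun _ => True) (GoodState μp rankW) (menPotential μp) (n * n)
      (fun _ => sum_card_le_mul_self _)
      (fun _ _ h => (exists_step_of_not_goodState hμ h).imp fun _ ⟨hs, hΦ⟩ => ⟨hs, trivial, hΦ⟩)
      a0 trivial
  obtain ⟨L₂, a₂, hL₂, path₂, -, hNE⟩ :=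
    RelPath.exists_of_potential (GoodState μp rankW) (IsPureNEAction μp rankW)
      (womenPotential rankW) (n * n) (fun _ => sum_card_le_mul_self _)
      (fun _ hgood h => exists_step_of_not_isPureNEAction hμ hM.2.2 hgood h) a₁ hgood
  obtain ⟨path, h0, hL, hsteps⟩ := (path₁.append path₂).exists_seq
  exact ⟨L₁ + L₂, path, by omega, h0, hsteps, hL ▸ hNE⟩

end SM
end

section
/- Consider the stable matching game with waiting-list payoffs u_m(x) = ∑_{w∈W} μ_{mw} (1 − ∑_{k >_w m} x_{kw}) x_{mw}. Then a pure strategy profile x* is a pure Nash equilibrium of this game if and only if x* is the characteristic vector of a stable matching. Moreover, for any mixed Nash equilibrium x of this game in which every woman receives at least one fractional proposal (for every w there exists m with x_{mw} > 0), matching each man m to his least preferred woman among {w : x_{mw} > 0} yields a stable matching. -/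
open Finset Real MeasureTheory

namespace SM

variable {n : ℕ}

/-- Waiting-list payoff `u_m(x) = ∑_w μ_{mw} (1 - ∑_{k >_w m} x_{kw}) x_{mw}`. -/
noncomputable def uWL (μp rankW : Fin n → Fin n → ℝ) (x : Fin n → Fin n → ℝ) (m : Fin n) : ℝ :=
  ∑ w, μp m w * (1 - ∑ k ∈ better rankW w m, x k w) * x m w

/-- Pure Nash equilibrium of the waiting-list stable matching game. -/
def IsPureNEWL (μp rankW : Fin n → Fin n → ℝ) (x : Fin n → Fin n → ℝ) : Prop :=
  (∀ m, IsPure (x m)) ∧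
  ∀ m y, IsPure y → uWL μp rankW (Function.update x m y) m ≤ uWL μp rankW x m

/-- (Mixed) Nash equilibrium of the waiting-list stable matching game. -/
def IsNEWL (μp rankW : Fin n → Fin n → ℝ) (x : Fin n → Fin n → ℝ) : Prop :=
  (∀ m, IsStrategy (x m)) ∧
  ∀ m y, IsStrategy y → uWL μp rankW (Function.update x m y) m ≤ uWL μp rankW x m

/-- Regularized waiting-list payoff `U_m(x) = u_m(x) - (β/2) ‖x_m‖²`. -/
noncomputable def Ureg (μp rankW : Fin n → Fin n → ℝ) (β : ℝ) (x : Fin n → Fin n → ℝ)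
    (m : Fin n) : ℝ :=
  uWL μp rankW x m - β/2 * ∑ w, (x m w)^2

/-- The matrix `Q^w = Aᵀ + A + 2βI`, where `A_{mk} = μ_{mw} 𝟏{k >_w m}`. -/
noncomputable def Qw (μp rankW : Fin n → Fin n → ℝ) (β : ℝ) (w m k : Fin n) : ℝ :=
  (if rankW w m < rankW w k then μp m w else 0) +
    (if rankW w k < rankW w m then μp k w else 0) +
    (if m = k then 2*β else 0)


lemma notMem_better (rankW : Fin n → Fin n → ℝ) (w m : Fin n) : m ∉ better rankW w m := by
  simp [better]

lemma uWL_update (μp rankW : Fin n → Fin n → ℝ) (x : Fin n → Fin n → ℝ) (m : Fin n)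
    (y : Fin n → ℝ) :
    uWL μp rankW (Function.update x m y) m
      = ∑ w, μp m w * (1 - ∑ k ∈ better rankW w m, x k w) * y w := by
  unfold uWL
  refine Finset.sum_congr rfl fun w _ => ?_
  have h1 : ∀ k ∈ better rankW w m, Function.update x m y k w = x k w := by
    intro k hk
    have hk' : k ≠ m := by rintro rfl; exact notMem_better rankW w k hk
    simp [Function.update_of_ne hk']
  rw [Finset.sum_congr rfl h1, Function.update_self]

lemma deviation_pure (μp rankW : Fin n → Fin n → ℝ) (x : Fin n → Fin n → ℝ) (m w₀ : Fin n) :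
    uWL μp rankW (Function.update x m (fun w => if w = w₀ then (1:ℝ) else 0)) m
      = μp m w₀ * (1 - ∑ k ∈ better rankW w₀ m, x k w₀) := by
  rw [uWL_update]
  simp [mul_ite, mul_one, mul_zero]

lemma uWL_self (μp rankW : Fin n → Fin n → ℝ) (x : Fin n → Fin n → ℝ) (m w₀ : Fin n)
    (hx : x m = fun w => if w = w₀ then (1:ℝ) else 0) :
    uWL μp rankW x m = μp m w₀ * (1 - ∑ k ∈ better rankW w₀ m, x k w₀) := by
  conv_lhs => rw [← Function.update_eq_self m x, hx]
  exact deviation_pure μp rankW x m w₀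


/-- Proposition 1: in the waiting-list stable matching game, a pure profile
is a pure NE iff it is the characteristic vector of a stable matching; moreover any mixed NE
in which every woman receives a fractional proposal can be rounded (matching each man to his
least preferred woman in his support) to a stable matching. -/
theorem waiting_list_NE_characterization {n : ℕ} (μp rankW : Fin n → Fin n → ℝ)
    (hM : MarketHyp μp rankW) :
    (∀ x : Fin n → Fin n → ℝ, (∀ m, IsPure (x m)) →
      (IsPureNEWL μp rankW x ↔
        ∃ σ : Equiv.Perm (Fin n), IsStableMatching μp rankW σ ∧ x = charVec σ)) ∧
    (∀ x : Fin n → Fin n → ℝ, IsNEWL μp rankW x →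
      (∀ w : Fin n, ∃ m, 0 < x m w) →
      ∀ wm : Fin n → Fin n,
        (∀ m, 0 < x m (wm m) ∧ ∀ w, 0 < x m w → μp m (wm m) ≤ μp m w) →
        ∃ σ : Equiv.Perm (Fin n), (∀ m, σ m = wm m) ∧ IsStableMatching μp rankW σ) := by
  obtain ⟨hpos, hties, hinjW⟩ := hM
  constructor
  · -- Part 1: pure NE ↔ stable matching
    intro x hxpure
    constructor
    · rintro ⟨-, hNE⟩
      choose f hf using hxpure
      have hxv : ∀ k w, x k w = if w = f k then (1:ℝ) else 0 := fun k w => by rw [hf k]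
      have hnn : ∀ k w, 0 ≤ x k w := fun k w => by rw [hxv]; split <;> norm_num
      have hSnn : ∀ m w, 0 ≤ ∑ k ∈ better rankW w m, x k w :=
        fun m w => Finset.sum_nonneg fun k _ => hnn k w
      have hu : ∀ m, uWL μp rankW x m
          = μp m (f m) * (1 - ∑ k ∈ better rankW (f m) m, x k (f m)) :=
        fun m => uWL_self μp rankW x m (f m) (hf m)
      have hle : ∀ m w, μp m w * (1 - ∑ k ∈ better rankW w m, x k w)
          ≤ μp m (f m) * (1 - ∑ k ∈ better rankW (f m) m, x k (f m)) := by
        intro m w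
        have h := hNE m (fun w' => if w' = w then 1 else 0) ⟨w, rfl⟩
        rwa [deviation_pure, hu m] at h
      have hkey : ∀ a b, f a = f b → a ≠ b → rankW (f a) a < rankW (f a) b → False := by
        intro a b hab hne' hr
        have hnsurj : ¬ Function.Surjective f := by
          intro hsurj
          exact hne' ((Finite.surjective_iff_bijective.mp hsurj).1 hab)
        obtain ⟨w₀, hw₀⟩ := not_forall.mp hnsurj
        have hfw : ∀ k, f k ≠ w₀ := fun k hk => hw₀ ⟨k, hk⟩
        have hS0 : ∑ k ∈ better rankW w₀ a, x k w₀ = 0 :=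
          Finset.sum_eq_zero fun k _ => by
            rw [hxv]; exact if_neg fun h => hfw k h.symm
        have hb : b ∈ better rankW (f a) a := by
          simp only [better, Finset.mem_filter, Finset.mem_univ, true_and]; exact hr
        have hxb : x b (f a) = 1 := by rw [hxv]; exact if_pos hab
        have hS1 : (1:ℝ) ≤ ∑ k ∈ better rankW (f a) a, x k (f a) := by
          calc (1:ℝ) = x b (f a) := hxb.symm
            _ ≤ _ := Finset.single_le_sum (fun k _ => hnn k (f a)) hb
        have h1 := hle a w₀
        rw [hS0] at h1
        have h2 := (hpos a w₀).1
        have h3 := (hpos a (f a)).1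
        nlinarith [mul_nonneg h3.le (sub_nonneg.mpr hS1)]
      have hinjf : Function.Injective f := by
        intro a b hab
        by_contra hne'
        have hr := (hinjW (f a)).ne hne'
        rcases lt_or_gt_of_ne hr with h | h
        · exact hkey a b hab hne' h
        · exact hkey b a hab.symm (Ne.symm hne') (by rw [← hab]; exact h)
      have hbij := Finite.injective_iff_bijective.mp hinjf
      refine ⟨Equiv.ofBijective f hbij, ?_, ?_⟩
      · rintro ⟨m, m', hne', hμ, hr⟩
        simp only [Equiv.ofBijective_apply] at hμ hr
        have hS0 : ∑ k ∈ better rankW (f m') m, x k (f m') = 0 := by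
          apply Finset.sum_eq_zero
          intro k hk
          simp only [better, Finset.mem_filter, Finset.mem_univ, true_and] at hk
          rw [hxv]
          refine if_neg fun h => ?_
          have hk' : m' = k := hinjf h
          rw [← hk'] at hk
          exact absurd hk (not_lt.mpr hr.le)
        have h1 := hle m (f m')
        rw [hS0] at h1
        have h2 := hSnn m (f m)
        have h3 := (hpos m (f m)).1
        nlinarith [mul_nonneg h3.le h2]
      · funext m w
        rw [hxv]
        rfl
    · rintro ⟨σ, hσ, rfl⟩
      have hnnc : ∀ k w, (0:ℝ) ≤ charVec σ k w := by
        intro k w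
        show (0:ℝ) ≤ if w = σ k then 1 else 0
        split <;> norm_num
      have hSσ : ∀ m, ∑ k ∈ better rankW (σ m) m, charVec σ k (σ m) = 0 := by
        intro m
        apply Finset.sum_eq_zero
        intro k hk
        have hkm : k ≠ m := fun h => notMem_better rankW (σ m) m (h ▸ hk)
        show (if σ m = σ k then (1:ℝ) else 0) = 0
        exact if_neg fun h => hkm (σ.injective h.symm)
      constructor
      · intro m; exact ⟨σ m, rfl⟩
      · rintro m y ⟨w₀, rfl⟩
        rw [deviation_pure, uWL_self μp rankW (charVec σ) m (σ m) rfl, hSσ m]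
        by_cases hw : w₀ = σ m
        · subst hw
          rw [hSσ m]
        · have hm' : σ (σ.symm w₀) = w₀ := σ.apply_symm_apply w₀
          set m' := σ.symm w₀ with hm'def
          have hne' : m ≠ m' := by
            intro h; rw [← h] at hm'; exact hw hm'.symm
          have hrne := (hinjW w₀).ne hne'
          have h2 := (hpos m (σ m)).1
          have h3 := (hpos m w₀).1
          rcases lt_or_gt_of_ne hrne with h | h
          · have hb : m' ∈ better rankW w₀ m := by
              simp only [better, Finset.mem_filter, Finset.mem_univ, true_and]; exact h
            have hxb : charVec σ m' w₀ = 1 := by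
              show (if w₀ = σ m' then (1:ℝ) else 0) = 1
              exact if_pos hm'.symm
            have hS1 : (1:ℝ) ≤ ∑ k ∈ better rankW w₀ m, charVec σ k w₀ := by
              calc (1:ℝ) = charVec σ m' w₀ := hxb.symm
                _ ≤ _ := Finset.single_le_sum (fun k _ => hnnc k w₀) hb
            nlinarith [mul_nonneg h3.le (sub_nonneg.mpr hS1)]
          · have hS0 : ∑ k ∈ better rankW w₀ m, charVec σ k w₀ = 0 := by
              apply Finset.sum_eq_zero
              intro k hk
              simp only [better, Finset.mem_filter, Finset.mem_univ, true_and] at hk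
              show (if w₀ = σ k then (1:ℝ) else 0) = 0
              refine if_neg fun hh => ?_
              have hk' : k = m' := by rw [hm'def]; exact (Equiv.eq_symm_apply σ).mpr hh.symm
              rw [hk'] at hk
              exact absurd hk (not_lt.mpr h.le)
            rw [hS0]
            have hnb : ¬ (μp m (σ m) < μp m (σ m')) := by
              intro hc
              exact hσ ⟨m, m', hne', hc, by rw [hm']; exact h⟩
            rw [hm'] at hnb
            linarith [not_lt.mp hnb]
  · -- Part 2: rounding a mixed NE
    intro x hNE hcov wm hwm
    obtain ⟨hs, hne⟩ := hNE
    have hnn : ∀ m w, 0 ≤ x m w := fun m w => (hs m).1 w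
    have hSnn : ∀ m w, 0 ≤ ∑ k ∈ better rankW w m, x k w :=
      fun m w => Finset.sum_nonneg fun k _ => hnn k w
    have hle : ∀ m w, μp m w * (1 - ∑ k ∈ better rankW w m, x k w) ≤ uWL μp rankW x m := by
      intro m w
      have h := hne m (fun w' => if w' = w then 1 else 0)
        ⟨fun w' => by dsimp only; split <;> norm_num, by simp⟩
      rwa [deviation_pure] at h
    have heq : ∀ m w, 0 < x m w →
        μp m w * (1 - ∑ k ∈ better rankW w m, x k w) = uWL μp rankW x m := by
      intro m w hxw
      by_contra hne'
      have hlt := lt_of_le_of_ne (hle m w) hne'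
      have h1 : ∑ w', μp m w' * (1 - ∑ k ∈ better rankW w' m, x k w') * x m w'
          < ∑ w', uWL μp rankW x m * x m w' :=
        Finset.sum_lt_sum (fun i _ => mul_le_mul_of_nonneg_right (hle m i) (hnn m i))
          ⟨w, Finset.mem_univ w, mul_lt_mul_of_pos_right hlt hxw⟩
      rw [← Finset.mul_sum, (hs m).2, mul_one] at h1
      have h2 : uWL μp rankW x m
          = ∑ w', μp m w' * (1 - ∑ k ∈ better rankW w' m, x k w') * x m w' := rfl
      rw [← h2] at h1
      exact lt_irrefl _ h1
    have key : ∀ w, ∃ m, 0 < x m w ∧ wm m = w ∧ ∀ k, 0 < x k w → rankW w k ≤ rankW w m := by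
      intro w
      obtain ⟨m0, hm0⟩ := hcov w
      obtain ⟨m, hmP, hmax⟩ := Finset.exists_max_image
        (Finset.univ.filter fun k => 0 < x k w) (rankW w) ⟨m0, by simp [hm0]⟩
      simp only [Finset.mem_filter, Finset.mem_univ, true_and] at hmP
      have hmax' : ∀ k, 0 < x k w → rankW w k ≤ rankW w m := fun k hk => hmax k (by simp [hk])
      refine ⟨m, hmP, ?_, hmax'⟩
      by_contra hne'
      have h1 : μp m (wm m) < μp m w :=
        lt_of_le_of_ne ((hwm m).2 w hmP) (hties m (wm m) w hne')
      have e1 := heq m (wm m) (hwm m).1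
      have e2 := heq m w hmP
      have hμ0 := (hpos m (wm m)).1
      have hμw := (hpos m w).1
      have hS1 := hSnn m (wm m)
      have hSpos : 0 < ∑ k ∈ better rankW w m, x k w := by
        by_contra hS
        push_neg at hS
        have t1 : 0 ≤ μp m (wm m) * (∑ k ∈ better rankW (wm m) m, x k (wm m)) :=
          mul_nonneg hμ0.le hS1
        have t2 : μp m w * (∑ k ∈ better rankW w m, x k w) ≤ 0 :=
          mul_nonpos_of_nonneg_of_nonpos hμw.le hS
        nlinarith
      obtain ⟨k, hkb, hkx⟩ : ∃ k ∈ better rankW w m, 0 < x k w := by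
        by_contra hc
        push_neg at hc
        have hz : ∑ k ∈ better rankW w m, x k w = 0 :=
          Finset.sum_eq_zero fun k hk => le_antisymm (hc k hk) (hnn k w)
        rw [hz] at hSpos
        exact lt_irrefl _ hSpos
      simp only [better, Finset.mem_filter, Finset.mem_univ, true_and] at hkb
      exact absurd (hmax' k hkx) (not_le.mpr hkb)
    have hsurj : Function.Surjective wm := fun w => (key w).elim fun m h => ⟨m, h.2.1⟩
    have hbij := Finite.surjective_iff_bijective.mp hsurj
    refine ⟨Equiv.ofBijective wm hbij, fun m => rfl, ?_⟩
    rintro ⟨m, m', hne', hμ, hr⟩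
    simp only [Equiv.ofBijective_apply] at hμ hr
    obtain ⟨t, htx, htw, htmax⟩ := key (wm m')
    have ht : t = m' := hbij.1 htw
    rw [ht] at htmax
    have hS0 : ∑ k ∈ better rankW (wm m') m, x k (wm m') = 0 := by
      apply Finset.sum_eq_zero
      intro k hk
      simp only [better, Finset.mem_filter, Finset.mem_univ, true_and] at hk
      by_contra hx0
      have hxk : 0 < x k (wm m') := (hnn k _).lt_of_ne (Ne.symm hx0)
      have := htmax k hxk
      linarith
    have h2 := hle m (wm m')
    rw [hS0] at h2
    have h3 := heq m (wm m) (hwm m).1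
    have h4 := hSnn m (wm m)
    have h5 := (hpos m (wm m)).1
    rw [← h3] at h2
    nlinarith [mul_nonneg h5.le h4]


end SM
end
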